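/- (Curvature at θ = 0: the surface in ℝ³₁) Let U ⊆ ℂ be open, and let a, μ : U → ℂ be holomorphic with μ(w) ≠ 0 and |a(w)| < 1 for all w ∈ U. Set λ₀(w) = √(4|μ(w)|²(1 − |a(w)|²)²) > 0. Then the Gauss curvature K(0;w) = −(1/λ₀²) Δ ln λ₀ satisfies K(0;w) = |a'(w)|²/(|μ(w)|²(1 − |a(w)|²)⁴) ≥ 0 for all w ∈ U, and K(0;w) = 0 if and only if a'(w) = 0; that is, the planar points of the minimal spacelike surface F(0;·) ⊂ ℝ³₁ are exactly the zeros of a'. -/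

import Mathlib

/-!
Near `w`, `log λ₀ = log 2 + ½ log |μ|² + log (1 - |a|²)`. If `df = Re (G dw)`, then
`Δf = Re (G_u + i G_v)`, i.e. `Δ = 4 ∂_w ∂_w̄`. For holomorphic `h`, the function
`log (c + ε|h|²)` has `G = 2ε h̄ h' / (c + ε|h|²)`, and the Leibniz rule for `∂_w̄`
(which kills `h` and `h'` and sends `h̄` to `h̄'`) gives
`G_u + i G_v = 4cε |h'|² / (c + ε|h|²)²`. Hence `log |μ|²` is harmonic (`c = 0`) and
`Δ log (1 - |a|²) = -4 |a'|² / (1 - |a|²)²`, which, divided by `-λ₀²`, is the claimed curvature.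
-/

open Complex ComplexConjugate

/-- The Euclidean Laplacian `Δf = f_uu + f_vv` of `f : ℂ → ℝ`, `w = u + iv`. -/
noncomputable def lap (f : ℂ → ℝ) (w : ℂ) : ℝ :=
  fderiv ℝ (fun z => fderiv ℝ f z 1) w 1 +
    fderiv ℝ (fun z => fderiv ℝ f z Complex.I) w Complex.I

open Topology

/-- `dbar F w = F_u + i F_v`, that is, twice the Wirtinger derivative `∂F/∂w̄`. -/
noncomputable def dbar (F : ℂ → ℂ) (w : ℂ) : ℂ := fderiv ℝ F w 1 + I * fderiv ℝ F w I

section Dbar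

variable {F G : ℂ → ℂ} {w : ℂ}

theorem dbar_add (hF : DifferentiableAt ℝ F w) (hG : DifferentiableAt ℝ G w) :
    dbar (fun z => F z + G z) w = dbar F w + dbar G w := by
  simp only [dbar, fderiv_fun_add hF hG, add_apply]
  ring

theorem dbar_mul (hF : DifferentiableAt ℝ F w) (hG : DifferentiableAt ℝ G w) :
    dbar (fun z => F z * G z) w = dbar F w * G w + F w * dbar G w := by
  simp only [dbar, fderiv_fun_mul hF hG, add_apply, smul_apply, smul_eq_mul]
  ring

theorem dbar_comp {φ : ℂ → ℂ} (hφ : DifferentiableAt ℂ φ (F w)) (hF : DifferentiableAt ℝ F w) :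
    dbar (fun z => φ (F z)) w = deriv φ (F w) * dbar F w := by
  have h := (hφ.hasDerivAt.complexToReal_fderiv.comp w hF.hasFDerivAt).fderiv
  simp only [Function.comp_def] at h
  simp [dbar, h]
  ring

theorem DifferentiableAt.dbar_eq_zero (hF : DifferentiableAt ℂ F w) : dbar F w = 0 := by
  simp [dbar, hF.hasDerivAt.complexToReal_fderiv.fderiv]
  ring_nf
  simp

theorem DifferentiableAt.dbar_conj (hF : DifferentiableAt ℂ F w) :
    dbar (fun z => conj (F z)) w = 2 * conj (deriv F w) := by
  have h := (conjCLE.hasFDerivAt.comp w hF.hasDerivAt.complexToReal_fderiv).fderiv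
  simp only [Function.comp_def, conjCLE_apply] at h
  simp [dbar, h]
  ring_nf
  rw [I_sq]
  ring

theorem dbar_const_mul (c : ℂ) (hF : DifferentiableAt ℝ F w) :
    dbar (fun z => c * F z) w = c * dbar F w := by
  rw [dbar_mul (differentiableAt_const c) hF, (differentiableAt_const c).dbar_eq_zero]
  ring

end Dbar

theorem lap_eq_re_dbar {f : ℂ → ℝ} {G : ℂ → ℂ} {w : ℂ}
    (hf : ∀ᶠ z in 𝓝 w, HasFDerivAt f (reCLM.comp (G z • (1 : ℂ →L[ℝ] ℂ))) z)
    (hG : DifferentiableAt ℝ G w) :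
    lap f w = (dbar G w).re := by
  have hdir : ∀ e, fderiv ℝ (fun z => fderiv ℝ f z e) w e = (fderiv ℝ G w e * e).re := by
    intro e
    have hfe : (fun z => fderiv ℝ f z e) =ᶠ[𝓝 w] fun z => (G z * e).re :=
      hf.mono fun z hz => by simp [hz.fderiv]
    have hGe := (reCLM.hasFDerivAt.comp w (hG.hasFDerivAt.mul_const e)).fderiv
    simp only [Function.comp_def, reCLM_apply] at hGe
    rw [hfe.fderiv_eq, hGe]
    simp only [ContinuousLinearMap.comp_apply, smul_apply, reCLM_apply, smul_eq_mul]
    rw [mul_comm]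
  simp [lap, dbar, hdir]

theorem differentiableAt_deriv_of_eventually {h : ℂ → ℂ} {w : ℂ}
    (hh : ∀ᶠ z in 𝓝 w, DifferentiableAt ℂ h z) : DifferentiableAt ℂ (deriv h) w :=
  (analyticAt_iff_eventually_differentiableAt.mpr hh).deriv.differentiableAt

section LogGrad

variable {c ε : ℝ} {h : ℂ → ℂ}

/-- `logGrad c ε h = 2 ∂_w log (c + ε|h|²)` for holomorphic `h`. -/
noncomputable def logGrad (c ε : ℝ) (h : ℂ → ℂ) (z : ℂ) : ℂ :=
  (2 * ε / (c + ε * ‖h z‖ ^ 2) : ℝ) * (conj (h z) * deriv h z)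

theorem logGrad_eq : logGrad c ε h =
    fun z => 2 * ε * (conj (h z) * (deriv h z * (c + ε * (conj (h z) * h z))⁻¹)) := by
  funext z
  simp only [logGrad, conj_mul']
  push_cast
  ring

theorem hasFDerivAt_log_add_mul_norm_sq {z : ℂ} (hh : DifferentiableAt ℂ h z)
    (hρ : c + ε * ‖h z‖ ^ 2 ≠ 0) :
    HasFDerivAt (fun y => Real.log (c + ε * ‖h y‖ ^ 2))
      (reCLM.comp (logGrad c ε h z • (1 : ℂ →L[ℝ] ℂ))) z := by
  refine (((hh.hasDerivAt.complexToReal_fderiv.norm_sq.const_mul ε).const_add c).log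
    hρ).congr_fderiv ?_
  ext e
  simp only [ContinuousLinearMap.comp_apply, smul_apply, one_apply_eq_self, reCLM_apply,
    innerSL_apply_apply, Complex.inner, logGrad, smul_eq_mul, nsmul_eq_mul]
  rw [mul_assoc _ _ e, re_ofReal_mul]
  field_simp
  ring_nf

theorem differentiableAt_logGrad {w : ℂ} (hh : ∀ᶠ z in 𝓝 w, DifferentiableAt ℂ h z)
    (hρ : c + ε * ‖h w‖ ^ 2 ≠ 0) : DifferentiableAt ℝ (logGrad c ε h) w := by
  have hρw : (c + ε * (conj (h w) * h w) : ℂ) ≠ 0 := by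
    rw [conj_mul']; exact_mod_cast hρ
  have hw := hh.self_of_nhds
  have hw' := differentiableAt_deriv_of_eventually hh
  rw [logGrad_eq]
  fun_prop (disch := exact hρw)

theorem dbar_logGrad {w : ℂ} (hh : ∀ᶠ z in 𝓝 w, DifferentiableAt ℂ h z)
    (hρ : c + ε * ‖h w‖ ^ 2 ≠ 0) :
    dbar (logGrad c ε h) w = 4 * c * ε * ‖deriv h w‖ ^ 2 / (c + ε * ‖h w‖ ^ 2) ^ 2 := by
  rw [logGrad_eq]
  set ρ : ℂ → ℂ := fun z => c + ε * (conj (h z) * h z) with hρ_def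
  have hρw : ρ w ≠ 0 := by
    simp only [ρ, conj_mul']; exact_mod_cast hρ
  have hw := hh.self_of_nhds
  have hw' := differentiableAt_deriv_of_eventually hh
  have hρd : DifferentiableAt ℝ ρ w := by fun_prop
  have hρdbar : dbar ρ w = 2 * ε * conj (deriv h w) * h w := by
    rw [hρ_def, dbar_add (by fun_prop) (by fun_prop), dbar_const_mul _ (by fun_prop),
      dbar_mul (by fun_prop) (by fun_prop), hw.dbar_conj, hw.dbar_eq_zero,
      (differentiableAt_const (c : ℂ)).dbar_eq_zero]
    ring
  have hinv : dbar (fun z => (ρ z)⁻¹) w = -dbar ρ w / ρ w ^ 2 := by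
    rw [dbar_comp (φ := fun x => x⁻¹) (differentiableAt_inv hρw) hρd, deriv_inv]
    ring
  rw [dbar_const_mul _ (by fun_prop (disch := exact hρw)),
    dbar_mul (F := fun z => conj (h z)) (by fun_prop) (by fun_prop (disch := exact hρw)),
    dbar_mul (F := deriv h) (hw'.restrictScalars ℝ) (by fun_prop (disch := exact hρw)),
    hinv, hρdbar, hw.dbar_conj, hw'.dbar_eq_zero, ← conj_mul' (h w), ← conj_mul' (deriv h w)]
  simp only [ρ] at hρw ⊢
  field_simp
  ring

end LogGrad

theorem log_sqrt_four_mul_sq_mul_sq {p q : ℝ} (hp : p ≠ 0) (hq : 0 < q) :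
    Real.log √(4 * p ^ 2 * q ^ 2) = Real.log 2 + Real.log (p ^ 2) / 2 + Real.log q := by
  have h : √(4 * p ^ 2 * q ^ 2) = 2 * |p| * q := by
    rw [show 4 * p ^ 2 * q ^ 2 = (2 * |p| * q) ^ 2 by rw [mul_pow, mul_pow, sq_abs]; ring]
    exact Real.sqrt_sq (by positivity)
  rw [h, Real.log_mul (by positivity) hq.ne', Real.log_mul two_ne_zero (abs_ne_zero.mpr hp),
    Real.log_pow, Real.log_abs]
  ring

theorem lap_log_conformalFactor {U : Set ℂ} (hU : IsOpen U) {a μ : ℂ → ℂ}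
    (ha : ∀ w ∈ U, DifferentiableAt ℂ a w) (hμ : ∀ w ∈ U, DifferentiableAt ℂ μ w)
    (hμ0 : ∀ w ∈ U, μ w ≠ 0) (ha1 : ∀ w ∈ U, ‖a w‖ < 1) {lam : ℂ → ℝ}
    (hlam : ∀ w ∈ U, lam w = √(4 * ‖μ w‖ ^ 2 * (1 - ‖a w‖ ^ 2) ^ 2)) {w : ℂ} (hw : w ∈ U) :
    lap (fun z => Real.log (lam z)) w = -4 * ‖deriv a w‖ ^ 2 / (1 - ‖a w‖ ^ 2) ^ 2 := by
  have hμρ : ∀ z ∈ U, 0 + 1 * ‖μ z‖ ^ 2 ≠ 0 := fun z hz => by simpa using hμ0 z hz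
  have haρ : ∀ z ∈ U, 0 < 1 + -1 * ‖a z‖ ^ 2 := fun z hz => by
    nlinarith [ha1 z hz, norm_nonneg (a z)]
  set G : ℂ → ℂ := fun z => (1 / 2 : ℂ) * logGrad 0 1 μ z + logGrad 1 (-1) a z
  have hG : ∀ z ∈ U,
      HasFDerivAt (fun z => Real.log (lam z)) (reCLM.comp (G z • (1 : ℂ →L[ℝ] ℂ))) z := by
    intro z hz
    have hsum := ((hasFDerivAt_log_add_mul_norm_sq (hμ z hz) (hμρ z hz)).const_mul (1 / 2)).add
      (hasFDerivAt_log_add_mul_norm_sq (ha z hz) (haρ z hz).ne')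
    refine (hsum.const_add (Real.log 2)).congr_of_eventuallyEq ?_ |>.congr_fderiv ?_
    · filter_upwards [hU.mem_nhds hz] with y hy
      rw [hlam y hy, log_sqrt_four_mul_sq_mul_sq (norm_ne_zero_iff.mpr (hμ0 y hy))
        (by linarith [haρ y hy])]
      simp only [Pi.add_apply]
      ring_nf
    · ext e
      simp [G, add_mul, mul_assoc]
  have hU_nhds : ∀ᶠ z in 𝓝 w, z ∈ U := hU.mem_nhds hw
  have hμ_nhds := hU_nhds.mono hμ
  have ha_nhds := hU_nhds.mono ha
  have hμG := differentiableAt_logGrad hμ_nhds (hμρ w hw)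
  have haG := differentiableAt_logGrad ha_nhds (haρ w hw).ne'
  rw [lap_eq_re_dbar (hU_nhds.mono hG) ((hμG.const_mul _).add haG),
    dbar_add (hμG.const_mul _) haG, dbar_const_mul _ hμG, dbar_logGrad hμ_nhds (hμρ w hw),
    dbar_logGrad ha_nhds (haρ w hw).ne']
  simp
  norm_cast

/-- curvature at θ = 0, the surface in ℝ³₁: for holomorphic `a, μ` on
open `U` with `μ ≠ 0`, `|a| < 1`, and `λ₀ = √(4|μ|²(1−|a|²)²)`, the Gauss curvature
`K(0;w) = −(1/λ₀²)Δ ln λ₀` satisfies `K(0;w) = |a'|²/(|μ|²(1−|a|²)⁴) ≥ 0`, and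
`K(0;w) = 0 ↔ a'(w) = 0` (planar points are exactly the zeros of `a'`). -/
theorem stmt_11 (U : Set ℂ) (hU : IsOpen U) (a μ : ℂ → ℂ)
    (ha : ∀ w ∈ U, DifferentiableAt ℂ a w) (hμ : ∀ w ∈ U, DifferentiableAt ℂ μ w)
    (hμ0 : ∀ w ∈ U, μ w ≠ 0) (ha1 : ∀ w ∈ U, ‖a w‖ < 1)
    (lam : ℂ → ℝ)
    (hlam : ∀ w, lam w =
      Real.sqrt (4 * ‖μ w‖ ^ 2 * (1 - ‖a w‖ ^ 2) ^ 2)) :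
    ∀ w ∈ U,
      -(1 / (lam w) ^ 2) * lap (fun z => Real.log (lam z)) w =
        ‖deriv a w‖ ^ 2 /
          (‖μ w‖ ^ 2 * (1 - ‖a w‖ ^ 2) ^ 4) ∧
      0 ≤ -(1 / (lam w) ^ 2) * lap (fun z => Real.log (lam z)) w ∧
      (-(1 / (lam w) ^ 2) * lap (fun z => Real.log (lam z)) w = 0 ↔ deriv a w = 0) := by
  intro w hw
  have hμw : ‖μ w‖ ≠ 0 := norm_ne_zero_iff.mpr (hμ0 w hw)
  have haw : 1 - ‖a w‖ ^ 2 ≠ 0 := by nlinarith [ha1 w hw, norm_nonneg (a w)]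
  have hK : -(1 / (lam w) ^ 2) * lap (fun z => Real.log (lam z)) w =
      ‖deriv a w‖ ^ 2 / (‖μ w‖ ^ 2 * (1 - ‖a w‖ ^ 2) ^ 4) := by
    rw [lap_log_conformalFactor hU ha hμ hμ0 ha1 (fun z _ => hlam z) hw, hlam,
      Real.sq_sqrt (by positivity)]
    field_simp
  refine ⟨hK, hK ▸ by positivity, ?_⟩
  rw [hK, div_eq_zero_iff, or_iff_left (by positivity), sq_eq_zero_iff, norm_eq_zero]
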